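/- arXiv:math/0306179 — 3 statements merged into one kernel-verified Lean document; each statement's English description precedes it below -/
import Mathlib

section
/- Let S be a cofibrantly generated model category and (A, B) ↪ (C, D) a full inclusion of pairs of small categories (A a full subcategory of C with B ⊆ D). Assume A is left absorbant in C, i.e. for every morphism c → a in C with a ∈ A the object c also lies in A, and assume D ∩ A = B. Then the restriction functor res_A^C and its right adjoint ext_A^C form a Quillen adjunction res_A^C : U_S(C,D) ⇄ U_S(A,B) : ext_A^C. In particular, the restriction to A of a D-cofibrant object is B-cofibrant, and res_A^C preserves cofibrations, fibrations and weak equivalences. -/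
/-! Preliminaries: basic notions of homotopical algebra (lifting properties,
model structures, transfinite compositions, relative cell complexes, smallness,
cofibrant generation) and the relative model structure `U_S(C,D)` on functor
categories, following Balmer–Matthey, "Codescent theory I". -/

universe w v u u₂ u₃

open CategoryTheory Limits

namespace Codescent

set_option linter.dupNamespace false

section Lifting

variable {M : Type u} [Category.{v} M]

/-- The class of morphisms having the left lifting property with respect to all
morphisms in `K`. -/
def llp (K : MorphismProperty M) : MorphismProperty M :=
  fun _ _ f => ∀ ⦃X Y : M⦄ (g : X ⟶ Y), K g → HasLiftingProperty f g

/-- The class of morphisms having the right lifting property with respect to all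
morphisms in `K`. -/
def rlp (K : MorphismProperty M) : MorphismProperty M :=
  fun _ _ g => ∀ ⦃A B : M⦄ (f : A ⟶ B), K f → HasLiftingProperty f g

/-- Intersection of two classes of morphisms. -/
def inter (P Q : MorphismProperty M) : MorphismProperty M :=
  fun _ _ f => P f ∧ Q f

/-- `f` is a retract of `g` (as objects of the arrow category). -/
def RetractHom {X Y X' Y' : M} (f : X ⟶ Y) (g : X' ⟶ Y') : Prop :=
  ∃ (i : Arrow.mk f ⟶ Arrow.mk g) (r : Arrow.mk g ⟶ Arrow.mk f), i ≫ r = 𝟙 (Arrow.mk f)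

/-- The object `c` is a retract of the object `d`. -/
def IsRetractObj (c d : M) : Prop :=
  ∃ (i : c ⟶ d) (r : d ⟶ c), i ≫ r = 𝟙 c

/-- A functorial factorization of every morphism as a morphism in `L` followed by
a morphism in `R`. -/
structure FunctorialFact (L R : MorphismProperty M) where
  Z : Arrow M ⥤ M
  ι : (Arrow.leftFunc : Arrow M ⥤ M) ⟶ Z
  π : Z ⟶ (Arrow.rightFunc : Arrow M ⥤ M)
  fac : ∀ f : Arrow M, ι.app f ≫ π.app f = f.hom
  mem_left : ∀ f : Arrow M, L (ι.app f)
  mem_right : ∀ f : Arrow M, R (π.app f)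

end Lifting

/-- A (Quillen) model structure on a category `M`: classes of weak equivalences,
cofibrations and fibrations satisfying MC2–MC5 (MC1, completeness and
cocompleteness, is imposed separately as `HasLimits`/`HasColimits`). -/
structure ModelStructure (M : Type u) [Category.{v} M] where
  weq : MorphismProperty M
  cof : MorphismProperty M
  fib : MorphismProperty M
  /-- MC2, two-out-of-three -/
  weq_comp : ∀ {X Y Z : M} (f : X ⟶ Y) (g : Y ⟶ Z), weq f → weq g → weq (f ≫ g)
  weq_cancel_left : ∀ {X Y Z : M} (f : X ⟶ Y) (g : Y ⟶ Z), weq f → weq (f ≫ g) → weq g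
  weq_cancel_right : ∀ {X Y Z : M} (f : X ⟶ Y) (g : Y ⟶ Z), weq g → weq (f ≫ g) → weq f
  /-- MC3, closure under retracts -/
  weq_retract : ∀ {X Y X' Y' : M} (f : X ⟶ Y) (g : X' ⟶ Y'), RetractHom f g → weq g → weq f
  cof_retract : ∀ {X Y X' Y' : M} (f : X ⟶ Y) (g : X' ⟶ Y'), RetractHom f g → cof g → cof f
  fib_retract : ∀ {X Y X' Y' : M} (f : X ⟶ Y) (g : X' ⟶ Y'), RetractHom f g → fib g → fib f
  /-- MC4, lifting -/
  cof_lift : ∀ {A B X Y : M} (f : A ⟶ B) (g : X ⟶ Y),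
    cof f → weq g → fib g → HasLiftingProperty f g
  fib_lift : ∀ {A B X Y : M} (f : A ⟶ B) (g : X ⟶ Y),
    weq f → cof f → fib g → HasLiftingProperty f g
  /-- MC5, functorial factorizations -/
  fact₁ : FunctorialFact (M := M) cof (inter weq fib)
  fact₂ : FunctorialFact (M := M) (inter weq cof) fib

section Transfinite

/-- A well-ordered type (with bottom element and successors), the index for
transfinite compositions (a "λ-sequence" index). -/
structure WOType : Type (w + 1) where
  carrier : Type w
  [lin : LinearOrder carrier]
  [succ : SuccOrder carrier]
  [bot : OrderBot carrier]
  [wf : WellFoundedLT carrier]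

attribute [instance] WOType.lin WOType.succ WOType.bot WOType.wf

variable {M : Type u} [Category.{v} M] {N : Type u₂} [Category.{v} N]

/-- The class of pushouts of morphisms of `K`. -/
def pushoutsOf (K : MorphismProperty M) : MorphismProperty M :=
  fun X Y f => ∃ (A B : M) (g : A ⟶ B) (t : A ⟶ X) (b : B ⟶ Y), K g ∧ IsPushout g t b f

/-- The inclusion functor of `{i // i < j}` into a preorder `J`. -/
def iioIncl {J : Type w} [Preorder J] (j : J) : {i : J // i < j} ⥤ J where
  obj i := i.1
  map {i i'} h := homOfLE (Subtype.coe_le_coe.mpr (leOfHom h))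

/-- The cocone on the restriction of `F : J ⥤ M` to `{i // i < j}` with apex `F.obj j`. -/
def iioCocone {J : Type w} [Preorder J] (F : J ⥤ M) (j : J) : Cocone (iioIncl j ⋙ F) where
  pt := F.obj j
  ι :=
    { app := fun i => F.map (homOfLE i.2.le)
      naturality := fun i i' h => by
        dsimp
        rw [Category.comp_id, ← F.map_comp]
        rfl }

/-- `F : J ⥤ M` is a (continuous) transfinite sequence all of whose successor
maps lie in the class `P`. -/
structure IsChainOf (P : MorphismProperty M) {J : Type w} [LinearOrder J] [SuccOrder J]
    (F : J ⥤ M) : Prop where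
  succ_mem : ∀ j : J, ¬ IsMax j → P (F.map (homOfLE (Order.le_succ j)))
  limit_isColimit : ∀ j : J, Order.IsSuccLimit j → Nonempty (IsColimit (iioCocone F j))

/-- The class of relative `K`-cells: transfinite compositions of pushouts of
morphisms of `K`. -/
def cell (K : MorphismProperty M) : MorphismProperty M :=
  fun X Y f => ∃ (J : WOType.{v}) (F : J.carrier ⥤ M)
    (_ : IsChainOf (pushoutsOf K) F) (c : Cocone F) (_ : IsColimit c)
    (e : X ≅ F.obj ⊥) (e' : c.pt ≅ Y), f = e.hom ≫ c.ι.app ⊥ ≫ e'.hom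

/-- A linear order is `κ`-filtered when it has no top element and every subset of
cardinality at most `κ` is bounded above. -/
def KFiltered (κ : Cardinal.{w}) (J : Type w) [LinearOrder J] : Prop :=
  (∀ j : J, ∃ j' : J, j < j') ∧
    ∀ s : Set J, Cardinal.mk s ≤ κ → ∃ j : J, ∀ i ∈ s, i ≤ j

/-- The object `d` is small relative to the class `K`: for some cardinal `κ`,
morphisms from `d` into the colimit of any `κ`-filtered well-ordered continuous
sequence with successor maps in `K` factor, essentially uniquely, through some
stage of the sequence. -/
def IsSmallRel (d : M) (K : MorphismProperty M) : Prop :=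
  ∃ κ : Cardinal.{v}, ∀ (J : WOType.{v}), KFiltered κ J.carrier →
    ∀ (F : J.carrier ⥤ M), IsChainOf K F →
    ∀ (c : Cocone F), IsColimit c →
      (∀ g : d ⟶ c.pt, ∃ (j : J.carrier) (h : d ⟶ F.obj j), h ≫ c.ι.app j = g) ∧
      (∀ (j j' : J.carrier) (h : d ⟶ F.obj j) (h' : d ⟶ F.obj j'),
        h ≫ c.ι.app j = h' ≫ c.ι.app j' →
          ∃ (k : J.carrier) (l : j ≤ k) (l' : j' ≤ k),
            h ≫ F.map (homOfLE l) = h' ≫ F.map (homOfLE l'))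

/-- The model structure `P` is cofibrantly generated, with set of generating
cofibrations `I` and set of generating trivial cofibrations `J`. -/
structure IsCofGen (P : ModelStructure M) (I J : MorphismProperty M) : Prop where
  small_I : ∀ ⦃X Y : M⦄ (f : X ⟶ Y), I f → IsSmallRel X (cell I)
  small_J : ∀ ⦃X Y : M⦄ (f : X ⟶ Y), J f → IsSmallRel X (cell J)
  fib_eq : P.fib = rlp J
  trivFib_eq : inter P.weq P.fib = rlp I

/-- A functor preserves pushouts. -/
def PreservesPushouts (G : M ⥤ N) : Prop :=
  ∀ ⦃Z X Y P : M⦄ (f : Z ⟶ X) (g : Z ⟶ Y) (inl : X ⟶ P) (inr : Y ⟶ P),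
    IsPushout f g inl inr → IsPushout (G.map f) (G.map g) (G.map inl) (G.map inr)

/-- A functor preserves transfinite compositions: it preserves colimits of
diagrams indexed by well-ordered types. -/
def PreservesTransfiniteCompositions (G : M ⥤ N) : Prop :=
  ∀ (J : Type v) [LinearOrder J] [WellFoundedLT J] (F : J ⥤ M) (c : Cocone F),
    IsColimit c → Nonempty (IsColimit (G.mapCocone c))

/-- The image `{G(f) | f ∈ K}` of a class of morphisms under a functor. -/
def strictImage (G : M ⥤ N) (K : MorphismProperty M) : MorphismProperty N :=
  fun _ _ g => ∃ (A B : M) (f : A ⟶ B), K f ∧ Arrow.mk (G.map f) = Arrow.mk g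

end Transfinite

section CofRep

variable {M : Type u} [Category.{v} M]

/-- The cofibrant replacement of `X` given by the functorial factorization of
`∅ ⟶ X`. -/
noncomputable def cofRep (P : ModelStructure M) [HasInitial M] (X : M) : M :=
  P.fact₁.Z.obj (Arrow.mk (initial.to X))

/-- The canonical trivial fibration `QX ⟶ X` from the cofibrant replacement. -/
noncomputable def cofRepHom (P : ModelStructure M) [HasInitial M] (X : M) :
    cofRep P X ⟶ X :=
  P.fact₁.π.app (Arrow.mk (initial.to X))

/-- The functor `X ↦ (∅ ⟶ X)` to the arrow category. -/
noncomputable def toArrowInit (M : Type u) [Category.{v} M] [HasInitial M] : M ⥤ Arrow M where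
  obj X := Arrow.mk (initial.to X)
  map {X Y} f := Arrow.homMk (u := 𝟙 _) (v := f) (by apply initial.hom_ext)

/-- The cofibrant replacement functor of the model structure `P`. -/
noncomputable def qFunctor (P : ModelStructure M) [HasInitial M] : M ⥤ M :=
  toArrowInit M ⋙ P.fact₁.Z

end CofRep

section FunctorCat

variable {S : Type u} [Category.{v} S]

/-- The class of morphisms in `S^C` that belong objectwise on `D` to the class `P`;
for `P` the weak equivalences (resp. fibrations) of a model structure these are
the `D`-weak equivalences (resp. the `D`-fibrations). -/
def objProp {C : Type v} [SmallCategory C] (P : MorphismProperty S) (D : Set C) :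
    MorphismProperty (C ⥤ S) :=
  fun _ _ η => ∀ d ∈ D, P (η.app d)

/-- Trivial `D`-fibrations in `S^C`. -/
def dTrivFib {C : Type v} [SmallCategory C] (P : ModelStructure S) (D : Set C) :
    MorphismProperty (C ⥤ S) :=
  inter (objProp P.weq D) (objProp P.fib D)

/-- `D`-cofibrations in `S^C`: the morphisms having the left lifting property with
respect to all trivial `D`-fibrations. -/
def dCof {C : Type v} [SmallCategory C] (P : ModelStructure S) (D : Set C) :
    MorphismProperty (C ⥤ S) :=
  llp (dTrivFib P D)

variable [HasColimits S]

/-- `D`-cofibrant objects of `S^C`. -/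
def dCofibrant {C : Type v} [SmallCategory C] (P : ModelStructure S) (D : Set C)
    (X : C ⥤ S) : Prop :=
  dCof P D (initial.to X)

/-- The model structure `U_S(C,D)` on `S^C`: a model structure whose weak
equivalences are the `D`-weak equivalences, whose fibrations are the
`D`-fibrations and whose cofibrations are the `D`-cofibrations. -/
structure RelStructure (P : ModelStructure S) (C : Type v) [SmallCategory C] (D : Set C) where
  N : ModelStructure (C ⥤ S)
  weq_eq : N.weq = objProp P.weq D
  fib_eq : N.fib = objProp P.fib D
  cof_eq : N.cof = dCof P D

/-- `X` satisfies `D`-codescent at `c`: the cofibrant replacement morphism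
`Q_{C,D} X ⟶ X` in `U_S(C,D)` is a weak equivalence at `c`. -/
def CodescentAt {C : Type v} [SmallCategory C] (P : ModelStructure S) {D : Set C}
    (U : RelStructure P C D) (X : C ⥤ S) (c : C) : Prop :=
  P.weq ((cofRepHom U.N X).app c)

/-- `X` satisfies `D`-codescent: the cofibrant replacement morphism
`Q_{C,D} X ⟶ X` is a `C`-weak equivalence. -/
def Codescent {C : Type v} [SmallCategory C] (P : ModelStructure S) {D : Set C}
    (U : RelStructure P C D) (X : C ⥤ S) : Prop :=
  ∀ c : C, CodescentAt P U X c

/-- The coproduct property for weak equivalences. -/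
def CoproductProperty (P : ModelStructure S) : Prop :=
  ∀ (ι : Type v) (X Y : ι → S) (f : ∀ i, X i ⟶ Y i),
    (∀ i, P.weq (f i)) ↔ P.weq (Limits.Sigma.map f)

end FunctorCat

section Pairs

variable {A : Type v} [SmallCategory A] {C : Type v} [SmallCategory C]

/-- Two subsets of objects are retract equivalent. -/
def RetractEquiv (D D' : Set C) : Prop :=
  (∀ d ∈ D, ∃ d' ∈ D', IsRetractObj d d') ∧ (∀ d' ∈ D', ∃ d ∈ D, IsRetractObj d' d)

/-- `Φ : (A,B) ⟶ (C,D)` is left glossy. -/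
def LeftGlossy (Φ : A ⥤ C) (B : Set A) : Prop :=
  ∀ b ∈ B, ∃ (ι : Type v) (tgt : ι → A) (β : ∀ i, Φ.obj b ⟶ Φ.obj (tgt i)),
    (∀ i, tgt i ∈ B) ∧
      ∀ (a : A) (α : Φ.obj b ⟶ Φ.obj a),
        ∃! p : (i : ι) × (tgt i ⟶ a), β p.1 ≫ Φ.map p.2 = α

/-- `Φ : (A,B) ⟶ (C,D)` is right glossy. -/
def RightGlossy (Φ : A ⥤ C) (B : Set A) : Prop :=
  ∀ b ∈ B, ∃ (ι : Type v) (src : ι → A) (β : ∀ j, Φ.obj (src j) ⟶ Φ.obj b),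
    (∀ j, src j ∈ B) ∧
      ∀ (a : A) (α : Φ.obj a ⟶ Φ.obj b),
        ∃! p : (j : ι) × (a ⟶ src j), Φ.map p.2 ≫ β p.1 = α

/-- A subset of objects is left absorbant: the source of any morphism whose
target lies in the subset also lies in the subset. -/
def LeftAbsorbant (D : Set C) : Prop :=
  ∀ ⦃c c' : C⦄, (c ⟶ c') → c' ∈ D → c ∈ D

end Pairs

end Codescent
open Codescent

/-! Restriction along `A ⊆ C` is left adjoint to right Kan extension, so it preserves
cofibrations as soon as extension preserves trivial fibrations. Since `A` is left absorbant, the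
pointwise Kan extension at `c ∉ A` is a limit over the empty comma category `c ↓ A`, hence terminal,
so extension of any map is an isomorphism off `A`; on `A` (a full subcategory) it is the map
itself, which is a trivial fibration on `D ∩ A ⊆ B`. Fibrations and weak equivalences are preserved objectwise because
`B ⊆ D`. -/

namespace CategoryTheory.Functor

variable {A : Type*} [Category A] {C : Type*} [Category C] {S : Type*} [Category S]
  (L : A ⥤ C) [∀ X : A ⥤ S, L.HasPointwiseRightKanExtension X]

lemma isIso_ran_map_app_of_isEmpty {X Y : A ⥤ S} (g : X ⟶ Y) (c : C)
    [IsEmpty (StructuredArrow c L)] : IsIso ((L.ran.map g).app c) :=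
  isIso_of_isTerminal
    (.ofIso (isLimitEquivIsTerminalOfIsEmpty _ _ (limit.isLimit _)) (L.ranObjObjIsoLimit X c).symm)
    (.ofIso (isLimitEquivIsTerminalOfIsEmpty _ _ (limit.isLimit _)) (L.ranObjObjIsoLimit Y c).symm)
    _

noncomputable def ranMapAppArrowIso [L.Full] [L.Faithful] {X Y : A ⥤ S} (g : X ⟶ Y)
    (a : A) : Arrow.mk ((L.ran.map g).app (L.obj a)) ≅ Arrow.mk (g.app a) :=
  Arrow.isoMk (asIso ((L.ranCounit.app X).app a)) (asIso ((L.ranCounit.app Y).app a))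
    (congr_app (L.ranCounit.naturality g) a).symm

end CategoryTheory.Functor

namespace Codescent

section Lifting

variable {M : Type u} [Category.{v} M] {N : Type u₂} [Category.{w} N]

lemma RetractHom.of_arrowIso {X Y X' Y' : M} {f : X ⟶ Y} {g : X' ⟶ Y'}
    (e : Arrow.mk f ≅ Arrow.mk g) : RetractHom f g :=
  ⟨e.hom, e.inv, e.hom_inv_id⟩

lemma RetractHom.id_of_isIso {X Y : M} (f : X ⟶ Y) [IsIso f] : RetractHom f (𝟙 Y) :=
  ⟨Arrow.homMk (u := f) (v := 𝟙 Y) (by simp), Arrow.homMk (u := inv f) (v := 𝟙 Y) (by simp),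
    by ext <;> simp⟩

lemma llp_map_of_adjunction {L : M ⥤ N} {R : N ⥤ M} (adj : L ⊣ R)
    {K : MorphismProperty M} {K' : MorphismProperty N}
    (hR : ∀ ⦃X Y : N⦄ (g : X ⟶ Y), K' g → K (R.map g))
    {A B : M} (f : A ⟶ B) (hf : llp K f) : llp K' (L.map f) := by
  intro X Y g hg
  rw [adj.hasLiftingProperty_iff]
  exact hf _ (hR g hg)

lemma llp_initial_to_obj_of_adjunction [HasInitial M] [HasInitial N] {L : M ⥤ N} {R : N ⥤ M}
    (adj : L ⊣ R) {K : MorphismProperty M} {K' : MorphismProperty N}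
    (hR : ∀ ⦃X Y : N⦄ (g : X ⟶ Y), K' g → K (R.map g))
    (X : M) (hX : llp K (initial.to X)) : llp K' (initial.to (L.obj X)) := by
  have := adj.leftAdjoint_preservesColimits
  let e : ⊥_ N ≅ L.obj (⊥_ M) := initialIsInitial.uniqueUpToIso (initialIsInitial.isInitialObj L _)
  rw [initial.hom_ext (initial.to (L.obj X)) (e.hom ≫ L.map (initial.to X))]
  intro Y Z g hg
  have := llp_map_of_adjunction adj hR _ hX g hg
  infer_instance

end Lifting

section ModelStructure

variable {M : Type u} [Category.{v} M]

lemma FunctorialFact.retractHom_id_left {L R : MorphismProperty M} (F : FunctorialFact L R)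
    (Y : M) : RetractHom (𝟙 Y) (F.ι.app (Arrow.mk (𝟙 Y))) :=
  ⟨Arrow.homMk (u := 𝟙 Y) (v := F.ι.app (Arrow.mk (𝟙 Y))) rfl,
    Arrow.homMk (u := 𝟙 Y) (v := F.π.app (Arrow.mk (𝟙 Y)))
      ((Category.comp_id (𝟙 Y)).trans (F.fac (Arrow.mk (𝟙 Y))).symm),
    by ext; exacts [Category.comp_id (𝟙 Y), F.fac _]⟩

lemma FunctorialFact.retractHom_id_right {L R : MorphismProperty M} (F : FunctorialFact L R)
    (Y : M) : RetractHom (𝟙 Y) (F.π.app (Arrow.mk (𝟙 Y))) :=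
  ⟨Arrow.homMk (u := F.ι.app (Arrow.mk (𝟙 Y))) (v := 𝟙 Y)
      ((F.fac (Arrow.mk (𝟙 Y))).trans (Category.comp_id (𝟙 Y)).symm),
    Arrow.homMk (u := F.π.app (Arrow.mk (𝟙 Y))) (v := 𝟙 Y) rfl,
    by ext; exacts [F.fac _, Category.comp_id (𝟙 Y)]⟩

namespace ModelStructure

variable (P : ModelStructure M)

lemma weq_of_isIso {X Y : M} (f : X ⟶ Y) [IsIso f] : P.weq f :=
  P.weq_retract _ _ (.id_of_isIso f) <|
    P.weq_retract _ _ (P.fact₂.retractHom_id_left Y) (P.fact₂.mem_left _).1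

lemma fib_of_isIso {X Y : M} (f : X ⟶ Y) [IsIso f] : P.fib f :=
  P.fib_retract _ _ (.id_of_isIso f) <|
    P.fib_retract _ _ (P.fact₂.retractHom_id_right Y) (P.fact₂.mem_right _)

end ModelStructure

end ModelStructure

section Restriction

variable {S : Type u} [Category.{v} S] {C : Type v} [SmallCategory C]

lemma objProp_whiskerLeft {A : Type v} [SmallCategory A] (F : A ⥤ C) (Q : MorphismProperty S)
    {B : Set A} {D : Set C} (hF : ∀ a ∈ B, F.obj a ∈ D) {X Y : C ⥤ S} {η : X ⟶ Y}
    (hη : objProp Q D η) : objProp Q B (Functor.whiskerLeft F η) :=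
  fun a ha => hη _ (hF a ha)

lemma ran_map_mem_dTrivFib [HasLimits S] (P : ModelStructure S) {Aset : Set C} (B D : Set C)
    (habs : LeftAbsorbant Aset) (hDA : D ∩ Aset ⊆ B)
    ⦃X Y : ObjectProperty.FullSubcategory (· ∈ Aset) ⥤ S⦄ (g : X ⟶ Y)
    (hg : dTrivFib P {x | x.obj ∈ B} g) :
    dTrivFib P D ((ObjectProperty.ι (· ∈ Aset)).ran.map g) := by
  set L := ObjectProperty.ι (· ∈ Aset)
  suffices h : ∀ d ∈ D, P.weq ((L.ran.map g).app d) ∧ P.fib ((L.ran.map g).app d) from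
    ⟨fun d hd => (h d hd).1, fun d hd => (h d hd).2⟩
  intro d hd
  by_cases hdA : d ∈ Aset
  · have hB : d ∈ B := hDA ⟨hd, hdA⟩
    have e := RetractHom.of_arrowIso (L.ranMapAppArrowIso g ⟨d, hdA⟩)
    exact ⟨P.weq_retract _ _ e (hg.1 _ hB), P.fib_retract _ _ e (hg.2 _ hB)⟩
  · have : IsEmpty (StructuredArrow d L) := ⟨fun f => hdA (habs f.hom f.right.property)⟩
    have := L.isIso_ran_map_app_of_isEmpty g d
    exact ⟨P.weq_of_isIso _, P.fib_of_isIso _⟩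

end Restriction

end Codescent

theorem statement_12_general {S : Type u} [Category.{v} S] [HasLimits S] [HasColimits S]
    (P : ModelStructure S)
    {C : Type v} [SmallCategory C] (Aset B D : Set C)
    (hBD : B ⊆ D)
    (habs : ∀ ⦃c a : C⦄, (c ⟶ a) → a ∈ Aset → c ∈ Aset)
    (hDA : D ∩ Aset = B) :
    Nonempty ((Functor.whiskeringLeft (ObjectProperty.FullSubcategory fun c => c ∈ Aset) C S).obj
        (ObjectProperty.ι (fun c => c ∈ Aset)) ⊣
      (ObjectProperty.ι (fun c => c ∈ Aset)).ran) ∧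
    (∀ ⦃X Y : C ⥤ S⦄ (η : X ⟶ Y), dCof P D η →
      dCof P {x : ObjectProperty.FullSubcategory fun c => c ∈ Aset | x.obj ∈ B}
        (((Functor.whiskeringLeft (ObjectProperty.FullSubcategory fun c => c ∈ Aset) C S).obj
          (ObjectProperty.ι (fun c => c ∈ Aset))).map η)) ∧
    (∀ ⦃X Y : C ⥤ S⦄ (η : X ⟶ Y), objProp P.weq D η → dCof P D η →
      objProp P.weq {x : ObjectProperty.FullSubcategory fun c => c ∈ Aset | x.obj ∈ B}
          (((Functor.whiskeringLeft (ObjectProperty.FullSubcategory fun c => c ∈ Aset) C S).obj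
            (ObjectProperty.ι (fun c => c ∈ Aset))).map η) ∧
        dCof P {x : ObjectProperty.FullSubcategory fun c => c ∈ Aset | x.obj ∈ B}
          (((Functor.whiskeringLeft (ObjectProperty.FullSubcategory fun c => c ∈ Aset) C S).obj
            (ObjectProperty.ι (fun c => c ∈ Aset))).map η)) ∧
    (∀ X : C ⥤ S, dCofibrant P D X →
      dCofibrant P {x : ObjectProperty.FullSubcategory fun c => c ∈ Aset | x.obj ∈ B}
        (((Functor.whiskeringLeft (ObjectProperty.FullSubcategory fun c => c ∈ Aset) C S).obj
          (ObjectProperty.ι (fun c => c ∈ Aset))).obj X)) ∧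
    (∀ ⦃X Y : C ⥤ S⦄ (η : X ⟶ Y), objProp P.fib D η →
      objProp P.fib {x : ObjectProperty.FullSubcategory fun c => c ∈ Aset | x.obj ∈ B}
        (((Functor.whiskeringLeft (ObjectProperty.FullSubcategory fun c => c ∈ Aset) C S).obj
          (ObjectProperty.ι (fun c => c ∈ Aset))).map η)) ∧
    (∀ ⦃X Y : C ⥤ S⦄ (η : X ⟶ Y), objProp P.weq D η →
      objProp P.weq {x : ObjectProperty.FullSubcategory fun c => c ∈ Aset | x.obj ∈ B}
        (((Functor.whiskeringLeft (ObjectProperty.FullSubcategory fun c => c ∈ Aset) C S).obj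
          (ObjectProperty.ι (fun c => c ∈ Aset))).map η)) := by
  set L := ObjectProperty.ι (fun c => c ∈ Aset)
  have adj := L.ranAdjunction S
  have hext := ran_map_mem_dTrivFib P B D habs hDA.le
  have hcof : ∀ ⦃X Y : C ⥤ S⦄ (η : X ⟶ Y), dCof P D η →
      dCof P {x : ObjectProperty.FullSubcategory fun c => c ∈ Aset | x.obj ∈ B}
        (((Functor.whiskeringLeft _ C S).obj L).map η) :=
    fun _ _ => llp_map_of_adjunction adj hext
  have hres (Q : MorphismProperty S) ⦃X Y : C ⥤ S⦄ (η : X ⟶ Y) (hη : objProp Q D η) :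
      objProp Q {x : ObjectProperty.FullSubcategory fun c => c ∈ Aset | x.obj ∈ B}
        (((Functor.whiskeringLeft _ C S).obj L).map η) :=
    objProp_whiskerLeft L Q (fun _ hx => hBD hx) hη
  exact ⟨⟨adj⟩, hcof, fun _ _ η hw hc => ⟨hres _ η hw, hcof η hc⟩,
    fun X => llp_initial_to_obj_of_adjunction adj hext X, hres _, hres _⟩

/-- for a left absorbant full subcategory `A ⊆ C` with
`D ∩ A = B`, the restriction and extension functors form a Quillen adjunction
`U_S(C,D) ⇄ U_S(A,B)` (Balmer–Matthey, Prop. 7.14). -/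
theorem statement_12 {S : Type u} [Category.{v} S] [HasLimits S] [HasColimits S]
    (P : ModelStructure S) (I J : MorphismProperty S) (hcg : IsCofGen P I J)
    {C : Type v} [SmallCategory C] (Aset B D : Set C)
    (hBA : B ⊆ Aset) (hBD : B ⊆ D)
    (habs : ∀ ⦃c a : C⦄, (c ⟶ a) → a ∈ Aset → c ∈ Aset)
    (hDA : D ∩ Aset = B) :
    Nonempty ((Functor.whiskeringLeft (ObjectProperty.FullSubcategory fun c => c ∈ Aset) C S).obj
        (ObjectProperty.ι (fun c => c ∈ Aset)) ⊣
      (ObjectProperty.ι (fun c => c ∈ Aset)).ran) ∧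
    (∀ ⦃X Y : C ⥤ S⦄ (η : X ⟶ Y), dCof P D η →
      dCof P {x : ObjectProperty.FullSubcategory fun c => c ∈ Aset | x.obj ∈ B}
        (((Functor.whiskeringLeft (ObjectProperty.FullSubcategory fun c => c ∈ Aset) C S).obj
          (ObjectProperty.ι (fun c => c ∈ Aset))).map η)) ∧
    (∀ ⦃X Y : C ⥤ S⦄ (η : X ⟶ Y), objProp P.weq D η → dCof P D η →
      objProp P.weq {x : ObjectProperty.FullSubcategory fun c => c ∈ Aset | x.obj ∈ B}
          (((Functor.whiskeringLeft (ObjectProperty.FullSubcategory fun c => c ∈ Aset) C S).obj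
            (ObjectProperty.ι (fun c => c ∈ Aset))).map η) ∧
        dCof P {x : ObjectProperty.FullSubcategory fun c => c ∈ Aset | x.obj ∈ B}
          (((Functor.whiskeringLeft (ObjectProperty.FullSubcategory fun c => c ∈ Aset) C S).obj
            (ObjectProperty.ι (fun c => c ∈ Aset))).map η)) ∧
    (∀ X : C ⥤ S, dCofibrant P D X →
      dCofibrant P {x : ObjectProperty.FullSubcategory fun c => c ∈ Aset | x.obj ∈ B}
        (((Functor.whiskeringLeft (ObjectProperty.FullSubcategory fun c => c ∈ Aset) C S).obj
          (ObjectProperty.ι (fun c => c ∈ Aset))).obj X)) ∧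
    (∀ ⦃X Y : C ⥤ S⦄ (η : X ⟶ Y), objProp P.fib D η →
      objProp P.fib {x : ObjectProperty.FullSubcategory fun c => c ∈ Aset | x.obj ∈ B}
        (((Functor.whiskeringLeft (ObjectProperty.FullSubcategory fun c => c ∈ Aset) C S).obj
          (ObjectProperty.ι (fun c => c ∈ Aset))).map η)) ∧
    (∀ ⦃X Y : C ⥤ S⦄ (η : X ⟶ Y), objProp P.weq D η →
      objProp P.weq {x : ObjectProperty.FullSubcategory fun c => c ∈ Aset | x.obj ∈ B}
        (((Functor.whiskeringLeft (ObjectProperty.FullSubcategory fun c => c ∈ Aset) C S).obj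
          (ObjectProperty.ι (fun c => c ∈ Aset))).map η)) :=
  statement_12_general P Aset B D hBD habs hDA
end

section
/- Let S be a cofibrantly generated model category and Φ : (A, B) → (C, D) a morphism of pairs of small categories such that (a) D = Φ(B) as sets of objects, and (b) Φ is left glossy. Let X ∈ S^C and a an object of A. Then X satisfies D-codescent at Φ(a) if and only if Φ^*X satisfies B-codescent at a. In particular, X satisfies D-codescent at every object of Φ(A) if and only if Φ^*X satisfies B-codescent. -/
/-! Preliminaries: basic notions of homotopical algebra (lifting properties,
model structures, transfinite compositions, relative cell complexes, smallness,
cofibrant generation) and the relative model structure `U_S(C,D)` on functor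
categories, following Balmer–Matthey, "Codescent theory I". -/

universe w v u u₂ u₃

open CategoryTheory Limits

open Codescent

/-!
Restriction along `Φ` has the right Kan extension as right adjoint, and left glossiness
identifies `(Ran E)(Φ b)` with the product of the `E(b_i)`. Hence `Ran` carries trivial
`B`-fibrations to trivial `D`-fibrations, so restriction preserves cofibrant objects. Lifting the
cofibrant replacement `Q(Φ^*X) ⟶ Φ^*X` through the trivial `B`-fibration `Φ^*(QX ⟶ X)` gives a
`B`-weak equivalence between cofibrant objects of `U_S(A,B)`. Trivial cofibrations of `U_S(A,B)`
are weak equivalences at every object (evaluation has a right adjoint built from products), so by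
Ken Brown's lemma this comparison map is a weak equivalence at every object, and
two-out-of-three concludes.
-/

namespace Codescent

section ModelCategory

open MorphismProperty

variable {M : Type u} [Category.{v} M]

theorem FunctorialFact.hasFactorization {L R : MorphismProperty M} (F : FunctorialFact L R) :
    L.HasFactorization R :=
  ⟨fun f => ⟨{
    Z := F.Z.obj (Arrow.mk f)
    i := F.ι.app (Arrow.mk f)
    p := F.π.app (Arrow.mk f)
    fac := F.fac _
    hi := F.mem_left _
    hp := F.mem_right _ }⟩⟩

instance isStableUnderRetracts_inter (W W' : MorphismProperty M) [W.IsStableUnderRetracts]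
    [W'.IsStableUnderRetracts] : (inter W W').IsStableUnderRetracts :=
  ⟨fun h hg => ⟨W.of_retract h hg.1, W'.of_retract h hg.2⟩⟩

namespace ModelStructure

variable (P : ModelStructure M)

instance isStableUnderComposition_weq : P.weq.IsStableUnderComposition :=
  ⟨P.weq_comp⟩

instance isStableUnderRetracts_weq : P.weq.IsStableUnderRetracts :=
  ⟨fun h => P.weq_retract _ _ ⟨h.i, h.r, h.retract⟩⟩

instance isStableUnderRetracts_cof : P.cof.IsStableUnderRetracts :=
  ⟨fun h => P.cof_retract _ _ ⟨h.i, h.r, h.retract⟩⟩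

instance isStableUnderRetracts_fib : P.fib.IsStableUnderRetracts :=
  ⟨fun h => P.fib_retract _ _ ⟨h.i, h.r, h.retract⟩⟩

theorem cof_eq_llp : P.cof = (inter P.weq P.fib).llp := by
  have := P.fact₁.hasFactorization
  exact (llp_eq_of_le_llp_of_hasFactorization_of_isStableUnderRetracts
    fun _ _ f hf _ _ g hg => P.cof_lift f g hf hg.1 hg.2).symm

theorem trivFib_eq_rlp : inter P.weq P.fib = P.cof.rlp := by
  have := P.fact₁.hasFactorization
  exact (rlp_eq_of_le_rlp_of_hasFactorization_of_isStableUnderRetracts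
    fun _ _ g hg _ _ f hf => P.cof_lift f g hf hg.1 hg.2).symm

theorem trivCof_eq_llp : inter P.weq P.cof = P.fib.llp := by
  have := P.fact₂.hasFactorization
  exact (llp_eq_of_le_llp_of_hasFactorization_of_isStableUnderRetracts
    fun _ _ f hf _ _ g hg => P.fib_lift f g hf.1 hf.2 hg).symm

theorem fib_eq_rlp : P.fib = (inter P.weq P.cof).rlp := by
  have := P.fact₂.hasFactorization
  exact (rlp_eq_of_le_rlp_of_hasFactorization_of_isStableUnderRetracts
    fun _ _ g hg _ _ f hf => P.fib_lift f g hf.1 hf.2 hg).symm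

theorem weq_id (X : M) : P.weq (𝟙 X) :=
  (P.trivCof_eq_llp ▸ llp_of_isIso _ (𝟙 X)).1

theorem weq_comp_iff {X Y Z : M} {f : X ⟶ Y} (g : Y ⟶ Z) (hf : P.weq f) :
    P.weq (f ≫ g) ↔ P.weq g :=
  ⟨P.weq_cancel_left f g hf, P.weq_comp f g hf⟩

instance isStableUnderProductsOfShape_trivFib (J : Type*) :
    (inter P.weq P.fib).IsStableUnderProductsOfShape J := by
  rw [trivFib_eq_rlp]
  infer_instance

instance isMultiplicative_cof : P.cof.IsMultiplicative := by
  rw [cof_eq_llp]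
  infer_instance

variable [HasInitial M]

def Cofibrant (X : M) : Prop :=
  P.cof (initial.to X)

theorem cofibrant_cofRep (X : M) : P.Cofibrant (cofRep P X) := by
  have h : initial.to (cofRep P X) = P.fact₁.ι.app (Arrow.mk (initial.to X)) :=
    initial.hom_ext _ _
  rw [Cofibrant, h]
  exact P.fact₁.mem_left _

theorem cofRepHom_mem (X : M) : inter P.weq P.fib (cofRepHom P X) :=
  P.fact₁.mem_right _

theorem exists_lift_cofRepHom {X Z : M} (p : Z ⟶ X) (hp : inter P.weq P.fib p) :
    ∃ l : cofRep P X ⟶ Z, l ≫ p = cofRepHom P X := by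
  have := P.cof_lift _ p (P.cofibrant_cofRep X) hp.1 hp.2
  let sq : CommSq (initial.to Z) (initial.to (cofRep P X)) p (cofRepHom P X) :=
    ⟨initial.hom_ext _ _⟩
  exact ⟨sq.lift, sq.fac_right⟩

variable [HasBinaryCoproducts M]

theorem cof_coprod_inl {X Y : M} (hY : P.Cofibrant Y) : P.cof (coprod.inl : X ⟶ X ⨿ Y) := by
  rw [Cofibrant, cof_eq_llp] at hY
  rw [cof_eq_llp]
  exact (inter P.weq P.fib).llp.of_isPushout (IsPushout.of_hasBinaryCoproduct' X Y) hY

theorem cof_coprod_inr {X Y : M} (hX : P.Cofibrant X) : P.cof (coprod.inr : Y ⟶ X ⨿ Y) := by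
  rw [Cofibrant, cof_eq_llp] at hX
  rw [cof_eq_llp]
  exact (inter P.weq P.fib).llp.of_isPushout (IsPushout.of_hasBinaryCoproduct' X Y).flip hX

/- Ken Brown's lemma. Factor `(f, 𝟙) : X ⨿ Y ⟶ Y` as a cofibration followed by a trivial
fibration `p`; both legs `X, Y ⟶ Z` are then trivial cofibrations, and `p` retracts the second. -/
theorem mem_of_weq_of_cofibrant (W : MorphismProperty M) [W.IsStableUnderComposition]
    (hW : inter P.weq P.cof ≤ W)
    (hW_cancel : ∀ {X Y Z : M} (f : X ⟶ Y) (g : Y ⟶ Z), W f → W (f ≫ g) → W g)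
    {X Y : M} {f : X ⟶ Y} (hX : P.Cofibrant X) (hY : P.Cofibrant Y) (hf : P.weq f) : W f := by
  have := P.fact₁.hasFactorization
  let h := factorizationData P.cof (inter P.weq P.fib) (coprod.desc f (𝟙 Y))
  have hj₀ : (coprod.inl ≫ h.i) ≫ h.p = f := by rw [Category.assoc, h.fac, coprod.inl_desc]
  have hj₁ : (coprod.inr ≫ h.i) ≫ h.p = 𝟙 Y := by rw [Category.assoc, h.fac, coprod.inr_desc]
  have hW₀ : W (coprod.inl ≫ h.i) :=
    hW _ ⟨P.weq_cancel_right _ _ h.hp.1 (by rwa [hj₀]),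
      P.cof.comp_mem _ _ (P.cof_coprod_inl hY) h.hi⟩
  have hW₁ : W (coprod.inr ≫ h.i) :=
    hW _ ⟨P.weq_cancel_right _ _ h.hp.1 (by rw [hj₁]; exact P.weq_id Y),
      P.cof.comp_mem _ _ (P.cof_coprod_inr hX) h.hi⟩
  have hWp : W h.p := hW_cancel _ _ hW₁ (by rw [hj₁]; exact hW _ ⟨P.weq_id Y, P.cof.id_mem Y⟩)
  rw [← hj₀]
  exact W.comp_mem _ _ hW₀ hWp

end ModelStructure

end ModelCategory

theorem _root_.CategoryTheory.Adjunction.llp_initial_to_obj {M : Type u} [Category.{v} M]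
    {N : Type u₂} [Category.{v} N] [HasInitial M] [HasInitial N] {G : M ⥤ N} {R : N ⥤ M}
    (adj : G ⊣ R) {T : MorphismProperty M} {T' : MorphismProperty N}
    (hR : ∀ ⦃E F : N⦄ (p : E ⟶ F), T' p → T (R.map p)) {Y : M}
    (hY : T.llp (initial.to Y)) : T'.llp (initial.to (G.obj Y)) := by
  intro E F p hp
  have := hY _ (hR p hp)
  refine ⟨fun {_ b} _ => ?_⟩
  let sq : CommSq (initial.to (R.obj E)) (initial.to Y) (R.map p) (adj.homEquiv _ _ b) :=
    ⟨initial.hom_ext _ _⟩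
  refine ⟨⟨⟨(adj.homEquiv _ _).symm sq.lift, initial.hom_ext _ _, ?_⟩⟩⟩
  rw [← adj.homEquiv_naturality_right_symm, sq.fac_right, Equiv.symm_apply_apply]

section RelStructure

open MorphismProperty

variable {S : Type u} [Category.{v} S] {P : ModelStructure S}
  {A : Type v} [SmallCategory A] {B : Set A}

theorem RelStructure.trivFib_iff (U : RelStructure P A B) {F G : A ⥤ S} (η : F ⟶ G) :
    inter U.N.weq U.N.fib η ↔ ∀ b ∈ B, inter P.weq P.fib (η.app b) := by
  rw [U.weq_eq, U.fib_eq]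
  exact ⟨fun h b hb => ⟨h.1 b hb, h.2 b hb⟩,
    fun h => ⟨fun b hb => (h b hb).1, fun b hb => (h b hb).2⟩⟩

variable [HasLimits S]

/- Evaluation at `a` is left adjoint to `E ↦ (a' ↦ ∏_{a' ⟶ a} E)`, which sends fibrations to
`B`-fibrations because products of fibrations are fibrations. -/
theorem RelStructure.weq_app_of_trivCof (U : RelStructure P A B) {F G : A ⥤ S} {f : F ⟶ G}
    (hf : inter U.N.weq U.N.cof f) (a : A) : P.weq (f.app a) := by
  suffices P.fib.llp (f.app a) from (P.trivCof_eq_llp ▸ this).1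
  intro E E' g hg
  have hRg : U.N.fib ((evaluationRightAdjoint S a).map g) := by
    rw [U.fib_eq]
    intro b _
    rw [P.fib_eq_rlp] at hg ⊢
    intro _ _ i hi
    have := fun (_ : b ⟶ a) => hg i hi
    change HasLiftingProperty i (Limits.Pi.map fun _ => g)
    infer_instance
  rw [U.N.trivCof_eq_llp] at hf
  exact ((evaluationAdjunctionLeft S a).hasLiftingProperty_iff f g).2 (hf _ hRg)

variable [HasColimits S]

theorem RelStructure.weq_app_of_cofibrant (U : RelStructure P A B) {F G : A ⥤ S} {f : F ⟶ G}
    (hF : U.N.Cofibrant F) (hG : U.N.Cofibrant G) (hf : U.N.weq f) (a : A) :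
    P.weq (f.app a) :=
  U.N.mem_of_weq_of_cofibrant (P.weq.inverseImage ((evaluation A S).obj a))
    (fun _ _ _ hf => U.weq_app_of_trivCof hf a)
    (fun f g hf hfg => P.weq_cancel_left (f.app a) (g.app a) hf hfg) hF hG hf

end RelStructure

section KanExtension

variable {A : Type v} [SmallCategory A] {C : Type v} [SmallCategory C] (Φ : A ⥤ C)
  {X : C} {ι : Type v} {tgt : ι → A} (β : ∀ i, X ⟶ Φ.obj (tgt i))

/- Unique factorization says that every comma category of this functor has exactly one object. -/
theorem initial_of_existsUnique_factorization
    (hβ : ∀ (a : A) (α : X ⟶ Φ.obj a), ∃! p : (i : ι) × (tgt i ⟶ a), β p.1 ≫ Φ.map p.2 = α) :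
    (Discrete.functor fun i => StructuredArrow.mk (β i)).Initial := by
  constructor
  intro j
  obtain ⟨⟨i₀, γ₀⟩, h₀, huniq⟩ := hβ j.right j.hom
  refine isConnected_of_isTerminal _ (x := CostructuredArrow.mk (Y := Discrete.mk i₀)
    (StructuredArrow.homMk γ₀ h₀ : StructuredArrow.mk (β i₀) ⟶ j)) ?_
  refine IsTerminal.ofUniqueHom (fun Y => ?_) (fun Y m => ?_)
  · obtain ⟨⟨i⟩, ⟨⟨⟩⟩, m⟩ := Y
    obtain ⟨rfl, hm⟩ := Sigma.mk.inj_iff.mp (huniq ⟨i, m.right⟩ (StructuredArrow.w m))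
    refine CostructuredArrow.homMk (𝟙 _) ?_
    ext
    simpa using (eq_of_heq hm).symm
  · ext
    exact Subsingleton.elim _ _

/- By initiality, `(Φ.ran.obj E).obj X` is the product of the `E.obj (tgt i)`. -/
theorem ran_map_app_mem_of_existsUnique_factorization
    (hβ : ∀ (a : A) (α : X ⟶ Φ.obj a), ∃! p : (i : ι) × (tgt i ⟶ a), β p.1 ≫ Φ.map p.2 = α)
    {S : Type u} [Category.{v} S] [HasLimits S] (W : MorphismProperty S)
    [W.IsStableUnderProductsOfShape ι] {E F : A ⥤ S} (η : E ⟶ F) (hη : ∀ i, W (η.app (tgt i))) : W ((Φ.ran.map η).app X) := by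
  let G := Discrete.functor fun i => StructuredArrow.mk (β i)
  have := initial_of_existsUnique_factorization Φ β hβ
  exact MorphismProperty.IsStableUnderLimitsOfShape.condition
    (G ⋙ StructuredArrow.proj X Φ ⋙ E) (G ⋙ StructuredArrow.proj X Φ ⋙ F) _ _
    ((Functor.Initial.isLimitWhiskerEquiv G _).symm (Φ.isPointwiseRightKanExtensionRanCounit E X))
    ((Functor.Initial.isLimitWhiskerEquiv G _).symm (Φ.isPointwiseRightKanExtensionRanCounit F X))
    (Functor.whiskerLeft (G ⋙ StructuredArrow.proj X Φ) η) (fun i => hη i.as) _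
    fun i => by
      change (Φ.ran.map η).app X ≫ (Φ.ran.obj F).map (G.obj i).hom ≫
          (Φ.ranCounit.app F).app (G.obj i).right =
        ((Φ.ran.obj E).map (G.obj i).hom ≫ (Φ.ranCounit.app E).app (G.obj i).right) ≫
          η.app (G.obj i).right
      rw [← NatTrans.naturality_assoc, Category.assoc]
      exact congrArg _ (congr_app (Φ.ranCounit.naturality η) _)

end KanExtension

section Pairs

variable {S : Type u} [Category.{v} S] {P : ModelStructure S}
  {A : Type v} [SmallCategory A] {C : Type v} [SmallCategory C] {Φ : A ⥤ C} {B : Set A}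
  {D : Set C} (UA : RelStructure P A B) (UC : RelStructure P C D)

theorem RelStructure.trivFib_whiskerLeft (hBD : Φ.obj '' B ⊆ D) {X Y : C ⥤ S} {p : X ⟶ Y}
    (hp : inter UC.N.weq UC.N.fib p) :
    inter UA.N.weq UA.N.fib (((Functor.whiskeringLeft A C S).obj Φ).map p) := by
  rw [UC.trivFib_iff] at hp
  exact (UA.trivFib_iff _).2 fun b hb => hp _ (hBD ⟨b, hb, rfl⟩)

variable [HasLimits S] [HasColimits S]

theorem RelStructure.cofibrant_comp_of_leftGlossy (hDB : D ⊆ Φ.obj '' B)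
    (hgl : LeftGlossy Φ B) {Y : C ⥤ S} (hY : UC.N.Cofibrant Y) : UA.N.Cofibrant (Φ ⋙ Y) := by
  rw [ModelStructure.Cofibrant, ModelStructure.cof_eq_llp] at hY ⊢
  refine (Φ.ranAdjunction S).llp_initial_to_obj (fun E F η hη => ?_) hY
  rw [UA.trivFib_iff] at hη
  refine (UC.trivFib_iff _).2 fun d hd => ?_
  obtain ⟨b, hb, rfl⟩ := hDB hd
  obtain ⟨ι, tgt, β, htgt, hfac⟩ := hgl b hb
  exact ran_map_app_mem_of_existsUnique_factorization Φ β hfac _ η fun i => hη _ (htgt i)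

theorem codescentAt_obj_iff_of_leftGlossy (hD : D = Φ.obj '' B) (hgl : LeftGlossy Φ B)
    (X : C ⥤ S) (a : A) :
    CodescentAt P UC X (Φ.obj a) ↔
      CodescentAt P UA (((Functor.whiskeringLeft A C S).obj Φ).obj X) a := by
  have hq := UA.trivFib_whiskerLeft UC hD.ge (UC.N.cofRepHom_mem X)
  obtain ⟨l, hl⟩ := UA.N.exists_lift_cofRepHom _ hq
  have hlw : UA.N.weq l :=
    UA.N.weq_cancel_right l _ hq.1 (by rw [hl]; exact (UA.N.cofRepHom_mem _).1)
  have hla : P.weq (l.app a) := UA.weq_app_of_cofibrant (UA.N.cofibrant_cofRep _)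
    (UA.cofibrant_comp_of_leftGlossy UC hD.le hgl (UC.N.cofibrant_cofRep X)) hlw a
  rw [CodescentAt, CodescentAt, ← hl, NatTrans.comp_app, P.weq_comp_iff _ hla]
  rfl

end Pairs

end Codescent

theorem statement_15_general {S : Type u} [Category.{v} S] [HasLimits S] [HasColimits S]
    (P : ModelStructure S)
    {A : Type v} [SmallCategory A] {C : Type v} [SmallCategory C]
    (Φ : A ⥤ C) (B : Set A) (D : Set C) (hD : D = Φ.obj '' B)
    (hgl : LeftGlossy Φ B)
    (UA : RelStructure P A B) (UC : RelStructure P C D) (X : C ⥤ S) :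
    (∀ a : A, CodescentAt P UC X (Φ.obj a) ↔
      CodescentAt P UA (((Functor.whiskeringLeft A C S).obj Φ).obj X) a) ∧
    ((∀ a : A, CodescentAt P UC X (Φ.obj a)) ↔
      Codescent P UA (((Functor.whiskeringLeft A C S).obj Φ).obj X)) :=
  ⟨codescentAt_obj_iff_of_leftGlossy UA UC hD hgl X,
    forall_congr' (codescentAt_obj_iff_of_leftGlossy UA UC hD hgl X)⟩

/-- left glossy invariance of codescent
(Balmer–Matthey, Theorem 8.13). -/
theorem statement_15 {S : Type u} [Category.{v} S] [HasLimits S] [HasColimits S]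
    (P : ModelStructure S) (I J : MorphismProperty S) (hcg : IsCofGen P I J)
    {A : Type v} [SmallCategory A] {C : Type v} [SmallCategory C]
    (Φ : A ⥤ C) (B : Set A) (D : Set C) (hD : D = Φ.obj '' B)
    (hgl : LeftGlossy Φ B)
    (UA : RelStructure P A B) (UC : RelStructure P C D) (X : C ⥤ S) :
    (∀ a : A, CodescentAt P UC X (Φ.obj a) ↔
      CodescentAt P UA (((Functor.whiskeringLeft A C S).obj Φ).obj X) a) ∧
    ((∀ a : A, CodescentAt P UC X (Φ.obj a)) ↔
      Codescent P UA (((Functor.whiskeringLeft A C S).obj Φ).obj X)) :=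
  statement_15_general P Φ B D hD hgl UA UC X
end

section
/- Let S be a cofibrantly generated model category and (C, D) a pair of small categories, with D regarded as a full subcategory of C. Then the derived adjunction Lind_D^C : Ho(U_S(D,D)) ⇄ Ho(U_S(C,D)) : Res_D^C, obtained from the Quillen adjunction (ind_D^C, res_D^C) between U_S(D,D) and U_S(C,D), is an adjoint equivalence of categories; in particular both the unit and the counit of this derived adjunction are isomorphisms. -/
/-! Preliminaries: basic notions of homotopical algebra (lifting properties,
model structures, transfinite compositions, relative cell complexes, smallness,
cofibrant generation) and the relative model structure `U_S(C,D)` on functor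
categories, following Balmer–Matthey, "Codescent theory I". -/

universe w v u u₂ u₃

open CategoryTheory Limits

open Codescent

/-! Since `D` is a full subcategory of `C`, the unit `Y ⟶ res (lan Y)` of `lan ⊣ res` is an
isomorphism. By a triangle identity, `res` then sends the counit `lan (res X) ⟶ X` to an
isomorphism, i.e. the counit is a `D`-weak equivalence. Hence unit and counit become
isomorphisms in the homotopy categories, so the localization `Res` of `res` is an equivalence,
and so is its left adjoint `Lind`. -/

namespace CategoryTheory.Adjunction

variable {C₁ C₂ D₁ D₂ : Type*} [Category* C₁] [Category* C₂] [Category* D₁] [Category* D₂]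
  (L₁ : C₁ ⥤ D₁) (W₁ : MorphismProperty C₁) [L₁.IsLocalization W₁]
  (L₂ : C₂ ⥤ D₂) (W₂ : MorphismProperty C₂) [L₂.IsLocalization W₂]

lemma isEquivalence_of_lifting_right_adjoint {F : C₁ ⥤ C₂} {G : C₂ ⥤ C₁} (adj : F ⊣ G)
    (hF : W₁ ≤ W₂.inverseImage F) (hunit : ∀ X, W₁ (adj.unit.app X))
    (hcounit : ∀ Y, W₂ (adj.counit.app Y)) (G' : D₂ ⥤ D₁)
    [Localization.Lifting L₂ W₂ (G ⋙ L₁) G'] :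
    G'.IsEquivalence := by
  have hFL : W₁.IsInvertedBy (F ⋙ L₂) := fun _ _ f hf => Localization.inverts L₂ W₂ _ (hF f hf)
  let F' : D₁ ⥤ D₂ := Localization.lift (F ⋙ L₂) hFL L₁
  have : IsIso (Functor.whiskerRight adj.unit L₁) :=
    (NatTrans.isIso_iff_isIso_app _).2 fun X => Localization.inverts L₁ W₁ _ (hunit X)
  have : IsIso (Functor.whiskerRight adj.counit L₂) :=
    (NatTrans.isIso_iff_isIso_app _).2 fun Y => Localization.inverts L₂ W₂ _ (hcounit Y)
  refine Localization.isEquivalence L₂ W₂ L₁ W₁ (G ⋙ L₁) G' (F ⋙ L₂) F' ?_ ?_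
  · exact Functor.associator _ _ _ ≪≫ Functor.isoWhiskerLeft G (Localization.fac _ hFL L₁) ≪≫
      (Functor.associator _ _ _).symm ≪≫ asIso (Functor.whiskerRight adj.counit L₂) ≪≫
      Functor.leftUnitor _
  · exact Functor.associator _ _ _ ≪≫
      Functor.isoWhiskerLeft F (Localization.Lifting.iso L₂ W₂ _ G') ≪≫
      (Functor.associator _ _ _).symm ≪≫ (asIso (Functor.whiskerRight adj.unit L₁)).symm ≪≫
      Functor.leftUnitor _

end CategoryTheory.Adjunction

namespace Codescent

lemma ModelStructure.weq_of_isIso_s19 {M : Type*} [Category* M] (P : ModelStructure M)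
    {X Y : M} (f : X ⟶ Y) [IsIso f] : P.weq f := by
  let ι : X ⟶ P.fact₂.Z.obj (Arrow.mk f) := P.fact₂.ι.app (Arrow.mk f)
  let π : P.fact₂.Z.obj (Arrow.mk f) ⟶ Y := P.fact₂.π.app (Arrow.mk f)
  have fac : ι ≫ π = f := P.fact₂.fac (Arrow.mk f)
  -- `f` is a retract of the weak equivalence `ι`, since `inv f ≫ ι` is a section of `π`.
  refine P.weq_retract f ι ⟨Arrow.homMk (u := 𝟙 X) (v := inv f ≫ ι) (by simp),
    Arrow.homMk (u := 𝟙 X) (v := π) (by simp [fac]), ?_⟩ (P.fact₂.mem_left (Arrow.mk f)).1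
  ext
  · simp
  · simp [fac]

instance ModelStructure.weq_respectsIso {M : Type*} [Category* M] (P : ModelStructure M) :
    P.weq.RespectsIso where
  precomp e _ f hf := P.weq_comp e f (P.weq_of_isIso_s19 e) hf
  postcomp e _ f hf := P.weq_comp f e hf (P.weq_of_isIso_s19 e)

variable {S : Type u} [Category.{v} S]

instance objProp_respectsIso {C : Type v} [SmallCategory C] (W : MorphismProperty S)
    [W.RespectsIso] (D : Set C) : (objProp W D).RespectsIso where
  precomp e _ f hf d hd := MorphismProperty.RespectsIso.precomp W (e.app d) (f.app d) (hf d hd)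
  postcomp e _ f hf d hd := MorphismProperty.RespectsIso.postcomp W (e.app d) (f.app d) (hf d hd)

lemma objProp_weq_of_isIso {C : Type v} [SmallCategory C] (P : ModelStructure S) (D : Set C)
    {X Y : C ⥤ S} (η : X ⟶ Y) [IsIso η] : objProp P.weq D η :=
  fun d _ => P.weq_of_isIso_s19 (η.app d)

lemma objProp_iff_objProp_univ_whiskerLeft {C : Type v} [SmallCategory C]
    (W : MorphismProperty S) (D : Set C) {X Y : C ⥤ S} (η : X ⟶ Y) :
    objProp W D η ↔ objProp W Set.univ (Functor.whiskerLeft (ObjectProperty.ι (· ∈ D)) η) :=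
  ⟨fun h d _ => h d.1 d.2, fun h d hd => h ⟨d, hd⟩ trivial⟩

variable [HasColimits S] {C : Type v} [SmallCategory C] (P : ModelStructure S) (D : Set C)

lemma objProp_weq_univ_le_inverseImage_lan :
    objProp P.weq (Set.univ : Set (ObjectProperty.FullSubcategory (· ∈ D))) ≤
      (objProp P.weq D).inverseImage (ObjectProperty.ι (· ∈ D)).lan := fun _ _ f hf => by
  let adj := (ObjectProperty.ι (· ∈ D)).lanAdjunction S
  rw [MorphismProperty.inverseImage_iff, objProp_iff_objProp_univ_whiskerLeft]
  exact (MorphismProperty.arrow_mk_iso_iff _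
    (Arrow.isoOfNatIso (asIso adj.unit) (Arrow.mk f))).1 hf

lemma objProp_weq_lanAdjunction_counit_app (X : C ⥤ S) :
    objProp P.weq D (((ObjectProperty.ι (· ∈ D)).lanAdjunction S).counit.app X) := by
  let adj := (ObjectProperty.ι (· ∈ D)).lanAdjunction S
  have : IsIso (Functor.whiskerLeft (ObjectProperty.ι (· ∈ D)) (adj.counit.app X)) :=
    isIso_of_hom_comp_eq_id _ (adj.right_triangle_components X)
  rw [objProp_iff_objProp_univ_whiskerLeft]
  exact objProp_weq_of_isIso P _ _

end Codescent

theorem statement_19_general {S : Type u} [Category.{v} S] [HasColimits S]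
    (P : ModelStructure S)
    {C : Type v} [SmallCategory C] (Dset : Set C)
    -- the derived adjunction `Lind ⊣ Res` between the homotopy categories
    -- `Ho(U_S(D,D))` and `Ho(U_S(C,D))` (localizations at the respective
    -- weak equivalences):
    (Lind : (objProp P.weq
        (Set.univ : Set (ObjectProperty.FullSubcategory fun c => c ∈ Dset))).Localization ⥤
      (objProp P.weq Dset).Localization)
    (Res : (objProp P.weq Dset).Localization ⥤
      (objProp P.weq
        (Set.univ : Set (ObjectProperty.FullSubcategory fun c => c ∈ Dset))).Localization)
    (adj : Lind ⊣ Res)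
    -- `Res` is the localization of the restriction functor:
    (hRes : (objProp P.weq Dset).Q ⋙ Res ≅
      (Functor.whiskeringLeft (ObjectProperty.FullSubcategory fun c => c ∈ Dset) C S).obj
          (ObjectProperty.ι fun c => c ∈ Dset) ⋙
        (objProp P.weq (Set.univ : Set (ObjectProperty.FullSubcategory fun c => c ∈ Dset))).Q) :
    Lind.IsEquivalence ∧ IsIso adj.unit ∧ IsIso adj.counit := by
  have : Localization.Lifting (objProp P.weq Dset).Q (objProp P.weq Dset) _ Res := ⟨hRes⟩
  have : Res.IsEquivalence :=
    ((ObjectProperty.ι (· ∈ Dset)).lanAdjunction S).isEquivalence_of_lifting_right_adjoint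
      (objProp P.weq Set.univ).Q _ (objProp P.weq Dset).Q _
      (objProp_weq_univ_le_inverseImage_lan P Dset)
      (fun _ => objProp_weq_of_isIso P _ _) (objProp_weq_lanAdjunction_counit_app P Dset) Res
  have : Lind.IsEquivalence := adj.isEquivalence_left_of_isEquivalence_right
  exact ⟨inferInstance, inferInstance, inferInstance⟩

/-- the derived adjunction `Lind_D^C ⊣ Res_D^C` between
`Ho(U_S(D,D))` and `Ho(U_S(C,D))` is an adjoint equivalence
(Balmer–Matthey, Theorem 12.9). -/
theorem statement_19 {S : Type u} [Category.{v} S] [HasLimits S] [HasColimits S]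
    (P : ModelStructure S) (I J : MorphismProperty S) (hcg : IsCofGen P I J)
    {C : Type v} [SmallCategory C] (Dset : Set C)
    -- the model structures `U_S(D,D)` and `U_S(C,D)`:
    (UD : RelStructure P (ObjectProperty.FullSubcategory fun c => c ∈ Dset)
      (Set.univ : Set (ObjectProperty.FullSubcategory fun c => c ∈ Dset)))
    (UCD : RelStructure P C Dset)
    -- the derived adjunction `Lind ⊣ Res` between the homotopy categories
    -- `Ho(U_S(D,D))` and `Ho(U_S(C,D))` (localizations at the respective
    -- weak equivalences):
    (Lind : (objProp P.weq
        (Set.univ : Set (ObjectProperty.FullSubcategory fun c => c ∈ Dset))).Localization ⥤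
      (objProp P.weq Dset).Localization)
    (Res : (objProp P.weq Dset).Localization ⥤
      (objProp P.weq
        (Set.univ : Set (ObjectProperty.FullSubcategory fun c => c ∈ Dset))).Localization)
    (adj : Lind ⊣ Res)
    -- `Res` is the localization of the restriction functor:
    (hRes : (objProp P.weq Dset).Q ⋙ Res ≅
      (Functor.whiskeringLeft (ObjectProperty.FullSubcategory fun c => c ∈ Dset) C S).obj
          (ObjectProperty.ι fun c => c ∈ Dset) ⋙
        (objProp P.weq (Set.univ : Set (ObjectProperty.FullSubcategory fun c => c ∈ Dset))).Q)
    -- `Lind` is the total left derived functor of the left Kan extension: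
    -- `Lind [Y] = [ind_D^C (Q_{D,D} Y)]`:
    (hLind : (objProp P.weq
        (Set.univ : Set (ObjectProperty.FullSubcategory fun c => c ∈ Dset))).Q ⋙ Lind ≅
      (qFunctor UD.N ⋙ (ObjectProperty.ι fun c => c ∈ Dset).lan (H := S)) ⋙
        (objProp P.weq Dset).Q) :
    Lind.IsEquivalence ∧ IsIso adj.unit ∧ IsIso adj.counit :=
  statement_19_general P Dset Lind Res adj hRes
end
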